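/- In the education signaling game specified in the context, the strategy profile in which both worker types choose C with probability 1 and the employer pays med after every signal (π₂(med|N) = π₂(med|C) = π₂(med|D) = 1) is a uniform rationality-compatible equilibrium (uRCE). -/

import Mathlib

open scoped Classical
open Finset Filter

noncomputable section

/-- `p` is a probability distribution on the finite type `X`. -/
def IsDist {X : Type*} [Fintype X] (p : X → ℝ) : Prop :=
  (∀ x, 0 ≤ p x) ∧ ∑ x, p x = 1

variable {Θ S A : Type*} [Fintype Θ] [Fintype S] [Fintype A]

/-- Sender's expected payoff `u₁(θ, s, π₂(·|s))` from signal `s` when the receiver plays `π₂`. -/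
def u1R (u₁ : Θ → S → A → ℝ) (π₂ : S → A → ℝ) (θ : Θ) (s : S) : ℝ :=
  ∑ a, π₂ s a * u₁ θ s a

/-- Receiver's expected payoff of action `a` after signal `s` under belief `p`. -/
def expU2 (u₂ : Θ → S → A → ℝ) (p : Θ → ℝ) (s : S) (a : A) : ℝ :=
  ∑ θ, p θ * u₂ θ s a

/-- `BR(p, s)`: pure best responses to belief `p` after signal `s`. -/
def BRb (u₂ : Θ → S → A → ℝ) (p : Θ → ℝ) (s : S) : Set A :=
  {a | ∀ a', expU2 u₂ p s a' ≤ expU2 u₂ p s a}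

/-- `A_s^BR`: actions that best respond to some belief after `s`. -/
def ABR (u₂ : Θ → S → A → ℝ) (s : S) : Set A :=
  {a | ∃ p, IsDist p ∧ a ∈ BRb u₂ p s}

/-- Membership in `Π₂•`: a receiver behavior strategy supported on `A_s^BR` after every `s`. -/
def Rational2 (u₂ : Θ → S → A → ℝ) (π₂ : S → A → ℝ) : Prop :=
  (∀ s, IsDist (π₂ s)) ∧ ∀ s a, π₂ s a ≠ 0 → a ∈ ABR u₂ s

/-- `u₁(θ,s,π₂(·|s)) ≥ max_{s' ≠ s} u₁(θ,s',π₂(·|s'))`. -/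
def WeakBest (u₁ : Θ → S → A → ℝ) (π₂ : S → A → ℝ) (θ : Θ) (s : S) : Prop :=
  ∀ s', s' ≠ s → u1R u₁ π₂ θ s' ≤ u1R u₁ π₂ θ s

/-- `u₁(θ,s,π₂(·|s)) > max_{s' ≠ s} u₁(θ,s',π₂(·|s'))`. -/
def StrictBest (u₁ : Θ → S → A → ℝ) (π₂ : S → A → ℝ) (θ : Θ) (s : S) : Prop :=
  ∀ s', s' ≠ s → u1R u₁ π₂ θ s' < u1R u₁ π₂ θ s

/-- `θ' ≿_s θ''`: `s` is more rationally-compatible with `θ'` than with `θ''`. -/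
def MoreCompat (u₁ u₂ : Θ → S → A → ℝ) (s : S) (θ' θ'' : Θ) : Prop :=
  ∀ π₂, Rational2 u₂ π₂ → WeakBest u₁ π₂ θ'' s → StrictBest u₁ π₂ θ' s

/-- `s` maximizes `s' ↦ u₁(θ, s', π₂(·|s'))`. -/
def GlobalBest (u₁ : Θ → S → A → ℝ) (π₂ : S → A → ℝ) (θ : Θ) (s : S) : Prop :=
  ∀ s', u1R u₁ π₂ θ s' ≤ u1R u₁ π₂ θ s

/-- `S_θ`: signals that best respond to some (not necessarily rational) receiver strategy. -/
def Sθ (u₁ : Θ → S → A → ℝ) (θ : Θ) : Set S :=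
  {s | ∃ π₂ : S → A → ℝ, (∀ s', IsDist (π₂ s')) ∧ GlobalBest u₁ π₂ θ s}

/-- `Θ_s`: types for which `s` is not dominated. -/
def Θtypes (u₁ : Θ → S → A → ℝ) (s : S) : Set Θ := {θ | s ∈ Sθ u₁ θ}

/-- Membership in `Π₁•`. -/
def Rational1 (u₁ : Θ → S → A → ℝ) (π₁ : Θ → S → ℝ) : Prop :=
  (∀ θ, IsDist (π₁ θ)) ∧ ∀ θ s, π₁ θ s ≠ 0 → s ∈ Sθ u₁ θ

/-- Nash equilibrium of the signaling game. -/
def NashEq (lam : Θ → ℝ) (u₁ u₂ : Θ → S → A → ℝ)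
    (π₁ : Θ → S → ℝ) (π₂ : S → A → ℝ) : Prop :=
  (∀ θ, IsDist (π₁ θ)) ∧ (∀ s, IsDist (π₂ s)) ∧
  (∀ θ s, π₁ θ s ≠ 0 → GlobalBest u₁ π₂ θ s) ∧
  (∀ s, (∃ θ, π₁ θ s ≠ 0) → ∀ a, π₂ s a ≠ 0 →
    ∀ a', ∑ θ, lam θ * π₁ θ s * u₂ θ s a' ≤ ∑ θ, lam θ * π₁ θ s * u₂ θ s a)

/-- Equilibrium expected payoff `E_π[u₁ | θ]`. -/
def eqPayoff (u₁ : Θ → S → A → ℝ) (π₁ : Θ → S → ℝ) (π₂ : S → A → ℝ) (θ : Θ) : ℝ :=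
  ∑ s, π₁ θ s * u1R u₁ π₂ θ s

/-- `s` is off the path of play of `π₁`. -/
def OffPath (π₁ : Θ → S → ℝ) (s : S) : Prop := ∀ θ, π₁ θ s = 0

/-- `J̃(s, π)`: types for which some best response to `s` weakly improves on the equilibrium. -/
def Jt (u₁ u₂ : Θ → S → A → ℝ) (π₁ : Θ → S → ℝ) (π₂ : S → A → ℝ) (s : S) : Set Θ :=
  {θ | ∃ a ∈ ABR u₂ s, eqPayoff u₁ π₁ π₂ θ ≤ u₁ θ s a}

/-- The odds-ratio condition defining `P_{θ'▷θ''}`. -/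
def OddsLe (lam : Θ → ℝ) (θ' θ'' : Θ) (p : Θ → ℝ) : Prop :=
  p θ'' * lam θ' ≤ lam θ'' * p θ'

/-- `Δ(T)`: beliefs supported on `T`. -/
def DeltaOn {Θ : Type*} [Fintype Θ] (T : Set Θ) : Set (Θ → ℝ) :=
  {p | IsDist p ∧ ∀ θ ∉ T, p θ = 0}

/-- `P̃(s, π)`: rationality-compatible beliefs at profile `π`. -/
def Pt (lam : Θ → ℝ) (u₁ u₂ : Θ → S → A → ℝ) (π₁ : Θ → S → ℝ) (π₂ : S → A → ℝ)
    (s : S) : Set (Θ → ℝ) :=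
  if (Jt u₁ u₂ π₁ π₂ s).Nonempty then
    DeltaOn (Jt u₁ u₂ π₁ π₂ s) ∩
      {p | ∀ θ' θ'', MoreCompat u₁ u₂ s θ' θ'' → OddsLe lam θ' θ'' p}
  else DeltaOn (Θtypes u₁ s)

/-- Rationality-compatible equilibrium. -/
def RCE (lam : Θ → ℝ) (u₁ u₂ : Θ → S → A → ℝ)
    (π₁ : Θ → S → ℝ) (π₂ : S → A → ℝ) : Prop :=
  NashEq lam u₁ u₂ π₁ π₂ ∧
  ∀ s a, π₂ s a ≠ 0 → ∃ p ∈ Pt lam u₁ u₂ π₁ π₂ s, a ∈ BRb u₂ p s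

/-- `P̂(s)`: uniformly rationality-compatible beliefs. -/
def Ph (lam : Θ → ℝ) (u₁ u₂ : Θ → S → A → ℝ) (s : S) : Set (Θ → ℝ) :=
  DeltaOn (Θtypes u₁ s) ∩
    {p | ∀ θ' θ'', MoreCompat u₁ u₂ s θ' θ'' → OddsLe lam θ' θ'' p}

/-- Uniform rationality-compatible equilibrium. -/
def URCE (lam : Θ → ℝ) (u₁ u₂ : Θ → S → A → ℝ)
    (π₁ : Θ → S → ℝ) (π₂ : S → A → ℝ) : Prop :=
  NashEq lam u₁ u₂ π₁ π₂ ∧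
  ∀ θ s, OffPath π₁ s → ∀ a, (∃ p ∈ Ph lam u₁ u₂ s, a ∈ BRb u₂ p s) →
    u₁ θ s a ≤ eqPayoff u₁ π₁ π₂ θ

/-- Receiver's expected payoff of a mixed action `α` after `s` under belief `p`. -/
def expU2m (u₂ : Θ → S → A → ℝ) (p : Θ → ℝ) (s : S) (α : A → ℝ) : ℝ :=
  ∑ θ, p θ * ∑ a, α a * u₂ θ s a

/-- `MBR(p, s)`: mixed best responses to belief `p` after `s`. -/
def MBRb (u₂ : Θ → S → A → ℝ) (p : Θ → ℝ) (s : S) : Set (A → ℝ) :=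
  {α | IsDist α ∧ ∀ α', IsDist α' → expU2m u₂ p s α' ≤ expU2m u₂ p s α}

/-- `MBR(s)`. -/
def MBR (u₂ : Θ → S → A → ℝ) (s : S) : Set (A → ℝ) :=
  {α | ∃ p, IsDist p ∧ α ∈ MBRb u₂ p s}

/-- `u₁(θ, s, α)` for a mixed action `α`. -/
def u1m (u₁ : Θ → S → A → ℝ) (θ : Θ) (s : S) (α : A → ℝ) : ℝ :=
  ∑ a, α a * u₁ θ s a

/-- `D(θ, s; π)`. -/
def Dset (u₁ u₂ : Θ → S → A → ℝ) (π₁ : Θ → S → ℝ) (π₂ : S → A → ℝ)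
    (θ : Θ) (s : S) : Set (A → ℝ) :=
  {α | α ∈ MBR u₂ s ∧ eqPayoff u₁ π₁ π₂ θ < u1m u₁ θ s α}

/-- `D°(θ, s; π)`. -/
def D0set (u₁ u₂ : Θ → S → A → ℝ) (π₁ : Θ → S → ℝ) (π₂ : S → A → ℝ)
    (θ : Θ) (s : S) : Set (A → ℝ) :=
  {α | α ∈ MBR u₂ s ∧ eqPayoff u₁ π₁ π₂ θ = u1m u₁ θ s α}

/-! ### The education signaling game -/

/-- Worker types. -/
inductive Ty | H | L
deriving DecidableEq

instance : Fintype Ty := ⟨{Ty.H, Ty.L}, fun x => by cases x <;> simp⟩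

/-- Education levels (signals): None, College, Ph.D. -/
inductive Sg | N | C | D
deriving DecidableEq

instance : Fintype Sg := ⟨{Sg.N, Sg.C, Sg.D}, fun x => by cases x <;> simp⟩

/-- Wages (receiver actions). -/
inductive Ac | low | med | high
deriving DecidableEq

instance : Fintype Ac := ⟨{Ac.low, Ac.med, Ac.high}, fun x => by cases x <;> simp⟩

/-- Type distribution: both types equally likely. -/
def lamE : Ty → ℝ := fun _ => 1 / 2

/-- Wage utility. -/
def z : Ac → ℝ
  | .low => 0
  | .med => 6
  | .high => 9

/-- Consumption value of (ability, education). -/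
def v : Ty → Sg → ℝ
  | .H, .N => 0
  | .L, .N => 0
  | .H, .C => 2
  | .L, .C => 1
  | .H, .D => -2
  | .L, .D => -4

/-- Worker (sender) payoffs. -/
def u1E (θ : Ty) (s : Sg) (a : Ac) : ℝ := z a + v θ s

/-- Employer (receiver) payoffs. -/
def u2E : Ty → Sg → Ac → ℝ
  | .H, .N, .low => -2
  | .H, .N, .med => 0
  | .H, .N, .high => 1
  | .L, .N, .low => 1
  | .L, .N, .med => 0
  | .L, .N, .high => -2
  | .H, .C, .low => -1
  | .H, .C, .med => 1
  | .H, .C, .high => 2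
  | .L, .C, .low => 2
  | .L, .C, .med => 1
  | .L, .C, .high => -1
  | .H, .D, .low => 0
  | .H, .D, .med => 2
  | .H, .D, .high => 3
  | .L, .D, .low => 3
  | .L, .D, .med => 2
  | .L, .D, .high => 0


end

/-! Both types strictly prefer `C` when every signal earns the medium wage, and the employer,
holding the prior, best responds to `C` with `med`. Off path, `D` cannot pay off for either
type even at the high wage. For `N`, the gain from `N` over any other signal is larger for `L`
than for `H`, so `L ≿_N H`: beliefs in `P̂(N)` weight `L` at least as much as `H`, which rules
out the high wage after `N`, and without it `N` pays at most `6`. -/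

lemma isDist_pure {X : Type*} [Fintype X] [DecidableEq X] (x₀ : X) :
    IsDist (fun x => if x = x₀ then (1 : ℝ) else 0) :=
  ⟨fun x => by dsimp only; split_ifs <;> norm_num, by simp⟩

lemma u1R_const_pure {Θ S A : Type*} [Fintype A] [DecidableEq A] (u₁ : Θ → S → A → ℝ)
    (a₀ : A) (θ : Θ) (s : S) :
    u1R u₁ (fun _ a => if a = a₀ then 1 else 0) θ s = u₁ θ s a₀ := by
  simp [u1R]

lemma eqPayoff_pooling {Θ S A : Type*} [Fintype S] [Fintype A] [DecidableEq S]
    (u₁ : Θ → S → A → ℝ) (π₂ : S → A → ℝ) (s₀ : S) (θ : Θ) :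
    eqPayoff u₁ (fun _ s => if s = s₀ then 1 else 0) π₂ θ = u1R u₁ π₂ θ s₀ := by
  simp [eqPayoff]

lemma nashEq_pooling {Θ S A : Type*} [Fintype Θ] [Fintype S] [Fintype A]
    [DecidableEq S] [DecidableEq A] (lam : Θ → ℝ) (u₁ u₂ : Θ → S → A → ℝ)
    (s₀ : S) (a₀ : A)
    (hsender : ∀ θ s, u₁ θ s a₀ ≤ u₁ θ s₀ a₀)
    (hreceiver : ∀ a, ∑ θ, lam θ * u₂ θ s₀ a ≤ ∑ θ, lam θ * u₂ θ s₀ a₀) :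
    NashEq lam u₁ u₂ (fun _ s => if s = s₀ then 1 else 0)
      (fun _ a => if a = a₀ then 1 else 0) := by
  refine ⟨fun _ => isDist_pure s₀, fun _ => isDist_pure a₀, ?_, ?_⟩
  · intro θ s hs s'
    obtain rfl : s = s₀ := by by_contra h; simp [h] at hs
    simpa [u1R_const_pure] using hsender θ s'
  · rintro s ⟨θ, hθ⟩ a ha a'
    obtain rfl : s = s₀ := by by_contra h; simp [h] at hθ
    obtain rfl : a = a₀ := by by_contra h; simp [h] at ha
    simpa using hreceiver a'

lemma u1R_add_separable {Θ S A : Type*} [Fintype A] (w : A → ℝ) (v : Θ → S → ℝ)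
    (π₂ : S → A → ℝ) (θ : Θ) (s : S) (h : IsDist (π₂ s)) :
    u1R (fun θ s a => w a + v θ s) π₂ θ s = ∑ a, π₂ s a * w a + v θ s := by
  simp only [u1R, mul_add, Finset.sum_add_distrib, ← Finset.sum_mul, h.2, one_mul]

lemma moreCompat_of_increasing_differences {Θ S A : Type*} [Fintype Θ] [Fintype S] [Fintype A]
    (u₂ : Θ → S → A → ℝ) (w : A → ℝ) (v : Θ → S → ℝ) (s : S) (θ' θ'' : Θ)
    (h : ∀ s' ≠ s, v θ'' s - v θ'' s' < v θ' s - v θ' s') :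
    MoreCompat (fun θ s a => w a + v θ s) u₂ s θ' θ'' := by
  intro π₂ hπ₂ hweak s' hs'
  have hθ'' := hweak s' hs'
  simp only [u1R_add_separable w v π₂ _ _ (hπ₂.1 _)] at hθ'' ⊢
  linarith [h s' hs']

lemma sum_univ_ty (f : Ty → ℝ) : ∑ θ, f θ = f .H + f .L := by
  rw [show (Finset.univ : Finset Ty) = {Ty.H, Ty.L} from rfl]
  simp

lemma moreCompat_N_L_H : MoreCompat u1E u2E .N .L .H :=
  moreCompat_of_increasing_differences u2E z v .N .L .H
    (by rintro (_ | _ | _) h; exacts [absurd rfl h, by norm_num [v], by norm_num [v]])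

lemma high_not_mem_BRb_N {p : Ty → ℝ} (hp : p ∈ Ph lamE u1E u2E .N) :
    Ac.high ∉ BRb u2E p .N := by
  intro hhigh
  have hodds : p .H * (1 / 2) ≤ 1 / 2 * p .L := hp.2 _ _ moreCompat_N_L_H
  have hsum : p .H + p .L = 1 := by simpa [sum_univ_ty] using hp.1.1.2
  have hmed := hhigh .med
  simp only [expU2, sum_univ_ty, u2E] at hmed
  linarith

/-- in the education game, the profile where both worker types choose
College and the employer pays the medium wage after every signal is a uRCE. -/
theorem education_pooling_on_C_is_uRCE :
    URCE lamE u1E u2E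
      (fun _ s => if s = Sg.C then 1 else 0)
      (fun _ a => if a = Ac.med then 1 else 0) := by
  refine ⟨nashEq_pooling _ _ _ _ _ ?_ ?_, ?_⟩
  · rintro (_ | _) (_ | _ | _) <;> norm_num [u1E, z, v]
  · rintro (_ | _ | _) <;> norm_num [sum_univ_ty, lamE, u2E]
  rintro θ s hoff a ⟨p, hp, hBR⟩
  rw [eqPayoff_pooling, u1R_const_pure]
  cases s with
  | C => simpa using hoff .H
  | D => cases θ <;> cases a <;> norm_num [u1E, z, v]
  | N =>
    cases a with
    | high => exact absurd hBR (high_not_mem_BRb_N hp)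
    | low | med => cases θ <;> norm_num [u1E, z, v]
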